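/- Let G : ℍ → ℂ be injective holomorphic such that G(z + 2πi) = G(z) + 2πi for every z ∈ ℍ, and such that G′(z) → 1 uniformly as Re z → +∞ (for every ε > 0 there is R with |G′(z) − 1| ≤ ε whenever Re z ≥ R). Then for every s > 0 there exists L ≥ 1 such that L^{−1}·|z − w| ≤ |G(z) − G(w)| ≤ L·|z − w| for all z, w with Re z ≥ s and Re w ≥ s; i.e. G is bi-Lipschitz on every half-plane {Re z ≥ s}, s > 0. -/

import Mathlib

/-!
Near infinity `G' ≈ 1`, so by the mean value inequality `G` is bi-Lipschitz with constants
close to `1` on `{Re z ≥ R}`, and `G z - z` grows at most like `(Re z - R) / 2` there. On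
the strip `s ≤ Re z ≤ R` periodicity reduces everything to a compact rectangle, where `|G'|`
is bounded and `|G z - z| ≤ M`. The only delicate point is the lower bound for `z` in the strip:
when `|z - w|` is large, the coarse bound `|G z - z - (G w - w)| ≤ 2M + |z - w| / 2` gives it;
when `|z - w|` is small, translating `z` into the rectangle puts both points in a fixed compact
subset of `ℍ`, on which an injective holomorphic map is bi-Lipschitz because its derivative
never vanishes.
-/

open Complex Set

noncomputable section

/-- The open right half-plane `ℍ = {z ∈ ℂ : Re z > 0}`. -/
def HalfPlane : Set ℂ := {z : ℂ | 0 < z.re}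

open Metric Filter Real
open scoped Topology

theorem AnalyticAt.exists_pow_eq {h : ℂ → ℂ} {z₀ : ℂ} (hh : AnalyticAt ℂ h z₀) (h₀ : h z₀ ≠ 0)
    {n : ℕ} (hn : n ≠ 0) : ∃ ρ : ℂ → ℂ, AnalyticAt ℂ ρ z₀ ∧ ρ z₀ ≠ 0 ∧ ∀ z, ρ z ^ n = h z := by
  set ρ : ℂ → ℂ := fun z ↦ h z₀ ^ (n⁻¹ : ℂ) * (h z / h z₀) ^ (n⁻¹ : ℂ)
  have hρ : ∀ z, ρ z ^ n = h z := fun z ↦ by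
    simp only [ρ, mul_pow, cpow_nat_inv_pow _ hn]
    field_simp
  refine ⟨ρ, analyticAt_const.mul ((hh.div analyticAt_const h₀).cpow analyticAt_const ?_), ?_, hρ⟩
  · simp [h₀]
  · exact fun h0 ↦ h₀ (by rw [← hρ, h0, zero_pow hn])

theorem not_injOn_of_eventuallyEq_add_pow {f ψ : ℂ → ℂ} {z₀ c : ℂ} {n : ℕ} {s : Set ℂ}
    (hψ : HasStrictDerivAt ψ c z₀) (hc : c ≠ 0) (hψ₀ : ψ z₀ = 0) (hn : 2 ≤ n)
    (hf : ∀ᶠ z in 𝓝 z₀, f z = f z₀ + ψ z ^ n) (hs : s ∈ 𝓝 z₀) : ¬ InjOn f s := by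
  intro hinj
  set O := {z | f z = f z₀ + ψ z ^ n} ∩ s
  have hV : ∀ᶠ t in 𝓝 0, t ∈ ψ '' O := by
    rw [← hψ₀, ← hψ.map_nhds_eq hc]
    exact image_mem_map (inter_mem hf hs)
  obtain ⟨ζ, hζ⟩ : ∃ ζ : ℂ, IsPrimitiveRoot ζ n := ⟨_, isPrimitiveRoot_exp n (by omega)⟩
  -- `t` and `t * ζ` are distinct with the same `n`-th power.
  have hpair : ∀ᶠ t in 𝓝 (0 : ℂ), t ∈ ψ '' O ∧ t * ζ ∈ ψ '' O :=
    hV.and (((continuous_mul_const ζ).tendsto' 0 0 (zero_mul ζ)).eventually hV)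
  obtain ⟨t, ⟨⟨a, ⟨ha, has⟩, rfl⟩, ⟨b, ⟨hb, hbs⟩, hbt⟩⟩, ht⟩ :=
    ((hpair.filter_mono nhdsWithin_le_nhds).and (self_mem_nhdsWithin (s := {0}ᶜ))).exists
  have hab : a = b := hinj has hbs (by rw [ha, hb, hbt, mul_pow, hζ.pow_eq_one, mul_one])
  rw [hab, eq_comm, mul_eq_left₀ (by simpa [hab] using ht)] at hbt
  exact hζ.ne_one (by omega) hbt

theorem deriv_ne_zero_of_injOn {f : ℂ → ℂ} {U : Set ℂ} (hU : IsOpen U)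
    (hf : DifferentiableOn ℂ f U) (hinj : InjOn f U) {z₀ : ℂ} (hz₀ : z₀ ∈ U) :
    deriv f z₀ ≠ 0 := by
  -- Near `z₀`, `f = f z₀ + ψ ^ n` with `ψ` a local coordinate; `f' z₀ = 0` forces `n ≥ 2`,
  -- and then `f` is `n`-to-one near `z₀`.
  intro h0
  have hfa : AnalyticAt ℂ f z₀ := hf.analyticAt (hU.mem_nhds hz₀)
  have hnonconst : ¬ ∀ᶠ z in 𝓝 z₀, f z - f z₀ = 0 := by
    intro hconst
    obtain ⟨z, ⟨hz, hzU⟩, hne⟩ := (((hconst.and (hU.eventually_mem hz₀)).filter_mono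
      nhdsWithin_le_nhds).and (self_mem_nhdsWithin (s := {z₀}ᶜ))).exists
    exact hne (hinj hzU hz₀ (sub_eq_zero.mp hz))
  obtain ⟨n, h, hh, hh₀, hfh⟩ :=
    (hfa.sub analyticAt_const).exists_eventuallyEq_pow_smul_nonzero_iff.mpr hnonconst
  have hn : n ≠ 0 := by
    rintro rfl
    simpa [hh₀.symm] using hfh.self_of_nhds
  obtain ⟨ρ, hρ, hρ₀, hρh⟩ := hh.exists_pow_eq hh₀ hn
  set ψ : ℂ → ℂ := fun z ↦ (z - z₀) * ρ z
  have hψ : HasStrictDerivAt ψ (ρ z₀) z₀ := by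
    have := HasStrictDerivAt.fun_mul ((hasStrictDerivAt_id z₀).sub_const z₀)
      ((hρ.contDiffAt (n := 1)).hasStrictDerivAt one_ne_zero)
    simpa using this
  have hfψ : f =ᶠ[𝓝 z₀] fun z ↦ f z₀ + ψ z ^ n := hfh.mono fun z hz ↦ by
    rw [Pi.sub_apply, smul_eq_mul, ← hρh, ← mul_pow] at hz
    exact (sub_eq_iff_eq_add'.mp hz :)
  have hn1 : n ≠ 1 := by
    rintro rfl
    refine hρ₀ (h0 ▸ ?_)
    rw [hfψ.deriv_eq]
    simpa using (hψ.hasDerivAt.const_add (f z₀)).deriv.symm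
  exact not_injOn_of_eventuallyEq_add_pow hψ hρ₀ (by simp [ψ]) (by omega) hfψ
    (hU.mem_nhds hz₀) hinj

theorem Convex.norm_image_sub_sub_mul_le {𝕜 : Type*} [RCLike 𝕜] {f : 𝕜 → 𝕜} {S : Set 𝕜}
    (hf : ∀ x ∈ S, DifferentiableAt 𝕜 f x) (hS : Convex ℝ S) {a : 𝕜} {C : ℝ}
    (hC : ∀ x ∈ S, ‖deriv f x - a‖ ≤ C) {z w : 𝕜} (hz : z ∈ S) (hw : w ∈ S) :
    ‖f z - f w - a * (z - w)‖ ≤ C * ‖z - w‖ := by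
  have hder : ∀ x ∈ S, deriv (fun u ↦ f u - a * u) x = deriv f x - a := fun x hx ↦ by
    simpa using ((hf x hx).hasDerivAt.fun_sub ((hasDerivAt_id x).const_mul a)).deriv
  calc ‖f z - f w - a * (z - w)‖ = ‖(f z - a * z) - (f w - a * w)‖ := by ring_nf
    _ ≤ C * ‖z - w‖ := hS.norm_image_sub_le_of_norm_deriv_le (f := fun u ↦ f u - a * u)
        (fun x hx ↦ (hf x hx).fun_sub (differentiableAt_id.const_mul a))
        (fun x hx ↦ (hder x hx).symm ▸ hC x hx) hw hz

theorem IsCompact.exists_pos_le_dist_of_injOn {X Y : Type*} [PseudoMetricSpace X] [MetricSpace Y]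
    {f : X → Y} {K : Set X} (hK : IsCompact K) (hf : ContinuousOn f K) (hinj : InjOn f K)
    {δ : ℝ} (hδ : 0 < δ) :
    ∃ c > 0, ∀ x ∈ K, ∀ y ∈ K, δ ≤ dist x y → c ≤ dist (f x) (f y) := by
  have hP : IsCompact {p ∈ K ×ˢ K | δ ≤ dist p.1 p.2} :=
    (hK.prod hK).inter_right (isClosed_le continuous_const continuous_dist)
  obtain ⟨c, hc, hcP⟩ := hP.exists_forall_le'
    (continuous_dist.comp_continuousOn ((hf.comp continuousOn_fst fun p hp ↦ hp.1.1).prodMk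
      (hf.comp continuousOn_snd fun p hp ↦ hp.1.2)))
    (a := 0) fun p ⟨⟨hp₁, hp₂⟩, hpδ⟩ ↦ dist_pos.mpr fun h ↦ by
      have := hinj hp₁ hp₂ h
      simp only [this, dist_self] at hpδ; linarith
  exact ⟨c, hc, fun x hx y hy hxy ↦ hcP (x, y) ⟨⟨hx, hy⟩, hxy⟩⟩

theorem IsCompact.exists_pos_mul_le_norm_sub_of_deriv_ne_zero {𝕜 : Type*} [RCLike 𝕜]
    {f : 𝕜 → 𝕜} {U K : Set 𝕜} (hK : IsCompact K) (hU : IsOpen U) (hKU : K ⊆ U)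
    (hf : DifferentiableOn 𝕜 f U) (hf'c : ContinuousOn (deriv f) U)
    (hf' : ∀ z ∈ K, deriv f z ≠ 0) :
    ∃ δ > 0, ∃ c > 0, ∀ z ∈ K, ∀ w, ‖z - w‖ ≤ δ → c * ‖z - w‖ ≤ ‖f z - f w‖ := by
  obtain ⟨m, hm, hmK⟩ := hK.exists_forall_le' (a := 0)
    (continuous_norm.comp_continuousOn (hf'c.mono hKU)) fun z hz ↦ norm_pos_iff.mpr (hf' z hz)
  obtain ⟨δ, hδ, hδU⟩ := hK.exists_cthickening_subset_open hU hKU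
  obtain ⟨ε, hε, hεK⟩ := mem_uniformity_dist.mp <| hK.uniformContinuousAt_of_continuousAt
    (deriv f) (fun z hz ↦ hf'c.continuousAt (hU.mem_nhds (hKU hz)))
    (dist_mem_uniformity (half_pos hm))
  set r := min δ (ε / 2)
  refine ⟨r, by positivity, m / 2, half_pos hm, fun z hz w hzw ↦ ?_⟩
  have hball : closedBall z r ⊆ U := (closedBall_subset_cthickening hz r).trans
    ((cthickening_mono (min_le_left _ _) K).trans hδU)
  have hderiv : ∀ x ∈ closedBall z r, ‖deriv f x - deriv f z‖ ≤ m / 2 := fun x hx ↦ by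
    rw [← dist_eq_norm, dist_comm]
    refine (hεK ?_ hz).le
    exact (mem_closedBall'.mp hx).trans_lt ((min_le_right _ _).trans_lt (half_lt_self hε))
  have hmv := (convex_closedBall z r).norm_image_sub_sub_mul_le
    (fun x hx ↦ hf.differentiableAt (hU.mem_nhds (hball hx))) hderiv
    (mem_closedBall_self (by positivity)) (mem_closedBall'.mpr (by rwa [dist_eq_norm]))
  calc m / 2 * ‖z - w‖ = m * ‖z - w‖ - m / 2 * ‖z - w‖ := by ring
    _ ≤ ‖deriv f z * (z - w)‖ - ‖f z - f w - deriv f z * (z - w)‖ := by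
      rw [norm_mul]
      gcongr
      exact hmK z hz
    _ ≤ ‖f z - f w‖ := by
      linarith [norm_sub_norm_le (deriv f z * (z - w)) (f z - f w),
        norm_sub_rev (deriv f z * (z - w)) (f z - f w)]

theorem IsCompact.exists_pos_mul_le_norm_sub_of_injOn {f : ℂ → ℂ} {U K : Set ℂ}
    (hK : IsCompact K) (hU : IsOpen U) (hKU : K ⊆ U) (hf : DifferentiableOn ℂ f U)
    (hinj : InjOn f U) : ∃ c > 0, ∀ z ∈ K, ∀ w ∈ K, c * ‖z - w‖ ≤ ‖f z - f w‖ := by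
  obtain ⟨δ, hδ, c₁, hc₁, hnear⟩ := hK.exists_pos_mul_le_norm_sub_of_deriv_ne_zero hU hKU hf
    (hf.deriv hU).continuousOn fun z hz ↦ deriv_ne_zero_of_injOn hU hf hinj (hKU hz)
  obtain ⟨c₂, hc₂, hfar⟩ := hK.exists_pos_le_dist_of_injOn (hf.continuousOn.mono hKU)
    (hinj.mono hKU) hδ
  have hD : 0 < diam K + 1 := by positivity
  refine ⟨min c₁ (c₂ / (diam K + 1)), by positivity, fun z hz w hw ↦ ?_⟩
  rcases le_total ‖z - w‖ δ with hzw | hzw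
  · exact (mul_le_mul_of_nonneg_right (min_le_left _ _) (norm_nonneg _)).trans (hnear z hz w hzw)
  · have hdiam : ‖z - w‖ ≤ diam K + 1 := by
      rw [← dist_eq_norm]
      linarith [dist_le_diam_of_mem hK.isBounded hz hw]
    calc min c₁ (c₂ / (diam K + 1)) * ‖z - w‖ ≤ c₂ / (diam K + 1) * (diam K + 1) := by
          gcongr
          exact min_le_right _ _
      _ = c₂ := div_mul_cancel₀ _ hD.ne'
      _ ≤ ‖f z - f w‖ := by
          simpa only [dist_eq_norm] using hfar z hz w hw (by rwa [dist_eq_norm])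

theorem isOpen_halfPlane : IsOpen HalfPlane := isOpen_lt continuous_const continuous_re

theorem exists_int_im_add_mul_two_pi_I_mem_Icc (z : ℂ) :
    ∃ k : ℤ, (z + k * (2 * π * I)).im ∈ Icc 0 (2 * π) := by
  obtain ⟨k, ⟨hk₀, hk₁⟩, -⟩ := existsUnique_add_zsmul_mem_Ico two_pi_pos z.im 0
  refine ⟨k, ?_, ?_⟩ <;> simp only [zsmul_eq_mul] at hk₀ hk₁ <;> simp <;> linarith

theorem apply_add_int_mul_two_pi_I {α : Type*} {φ : ℂ → α}
    (hφ : ∀ z ∈ HalfPlane, φ (z + 2 * π * I) = φ z) (k : ℤ) {z : ℂ} (hz : z ∈ HalfPlane) :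
    φ (z + k * (2 * π * I)) = φ z := by
  have hmem : ∀ j : ℤ, z + j * (2 * π * I) ∈ HalfPlane := fun j ↦ by
    simpa [HalfPlane] using hz
  induction k using Int.induction_on with
  | zero => simp
  | succ j ih =>
    rw [← ih, ← hφ _ (hmem j)]
    push_cast
    ring_nf
  | pred j ih =>
    rw [← ih, ← hφ _ (hmem (-j - 1))]
    push_cast
    ring_nf

theorem map_add_int_mul_two_pi_I {G : ℂ → ℂ}
    (hper : ∀ z ∈ HalfPlane, G (z + 2 * π * I) = G z + 2 * π * I) (k : ℤ) {z : ℂ}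
    (hz : z ∈ HalfPlane) : G (z + k * (2 * π * I)) = G z + k * (2 * π * I) := by
  have := apply_add_int_mul_two_pi_I (φ := fun z ↦ G z - z)
    (fun z hz ↦ by rw [hper z hz]; ring) k hz
  linear_combination this

theorem deriv_add_two_pi_I {G : ℂ → ℂ}
    (hper : ∀ z ∈ HalfPlane, G (z + 2 * π * I) = G z + 2 * π * I) {z : ℂ}
    (hz : z ∈ HalfPlane) : deriv G (z + 2 * π * I) = deriv G z := by
  have hev : (fun w ↦ G (w + 2 * π * I)) =ᶠ[𝓝 z] fun w ↦ G w + 2 * π * I :=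
    (isOpen_halfPlane.eventually_mem hz).mono hper
  rw [← deriv_comp_add_const, hev.deriv_eq, deriv_add_const]

theorem exists_bound_on_strip_of_periodic {E : Type*} [SeminormedAddCommGroup E] {φ : ℂ → E}
    (hφ : ContinuousOn φ HalfPlane) (hper : ∀ z ∈ HalfPlane, φ (z + 2 * π * I) = φ z)
    {s : ℝ} (hs : 0 < s) (R : ℝ) : ∃ C, ∀ z : ℂ, s ≤ z.re → z.re ≤ R → ‖φ z‖ ≤ C := by
  have hK : Icc s R ×ℂ Icc 0 (2 * π) ⊆ HalfPlane := fun z hz ↦ hs.trans_le hz.1.1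
  obtain ⟨C, hC⟩ := (isCompact_Icc.reProdIm isCompact_Icc).exists_bound_of_continuousOn
    (hφ.mono hK)
  refine ⟨C, fun z hz hzR ↦ ?_⟩
  obtain ⟨k, hk⟩ := exists_int_im_add_mul_two_pi_I_mem_Icc z
  rw [← apply_add_int_mul_two_pi_I hper k (hs.trans_le hz)]
  exact hC _ ⟨by simpa using ⟨hz, hzR⟩, hk⟩

section

variable {G : ℂ → ℂ} {s R M : ℝ}

theorem norm_sub_sub_le_mul_of_le_re (hd : DifferentiableOn ℂ G HalfPlane) (hR₀ : 0 < R) {C : ℝ}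
    (hR : ∀ z : ℂ, R ≤ z.re → ‖deriv G z - 1‖ ≤ C) {z w : ℂ} (hz : R ≤ z.re) (hw : R ≤ w.re) :
    ‖G z - G w - (z - w)‖ ≤ C * ‖z - w‖ := by
  simpa using (convex_halfSpace_re_ge R).norm_image_sub_sub_mul_le
    (fun x hx ↦ hd.differentiableAt (isOpen_halfPlane.mem_nhds (hR₀.trans_le hx))) hR hz hw

theorem norm_sub_sub_le_add_of_re_le (hd : DifferentiableOn ℂ G HalfPlane) (hs : 0 < s)
    (hsR : s ≤ R) (hR : ∀ z : ℂ, R ≤ z.re → ‖deriv G z - 1‖ ≤ 1 / 2)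
    (hM : ∀ z : ℂ, s ≤ z.re → z.re ≤ R → ‖G z - z‖ ≤ M) {z w : ℂ} (hz : s ≤ z.re)
    (hzR : z.re ≤ R) (hw : s ≤ w.re) : ‖G z - G w - (z - w)‖ ≤ 2 * M + ‖z - w‖ / 2 := by
  rcases le_total w.re R with hwR | hwR
  · calc ‖G z - G w - (z - w)‖ = ‖(G z - z) - (G w - w)‖ := by ring_nf
      _ ≤ M + M := (norm_sub_le _ _).trans (add_le_add (hM z hz hzR) (hM w hw hwR))
      _ ≤ 2 * M + ‖z - w‖ / 2 := by linarith [norm_nonneg (z - w)]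
  set w' : ℂ := w - (w.re - R : ℝ)
  have hw'R : w'.re = R := by simp [w']
  have hww' : ‖w - w'‖ ≤ ‖z - w‖ := by
    rw [show w - w' = ((w.re - R : ℝ) : ℂ) by simp [w'], norm_real,
      Real.norm_of_nonneg (by linarith)]
    have := abs_re_le_norm (z - w)
    rw [sub_re, abs_le] at this
    linarith
  have hfar := norm_sub_sub_le_mul_of_le_re hd (hs.trans_le hsR) hR hwR hw'R.ge
  calc ‖G z - G w - (z - w)‖ = ‖(G z - z) - (G w' - w') - (G w - G w' - (w - w'))‖ := by ring_nf
    _ ≤ M + M + 1 / 2 * ‖w - w'‖ := by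
      refine (norm_sub_le _ _).trans (add_le_add ((norm_sub_le _ _).trans (add_le_add
        (hM z hz hzR) (hM w' (hw'R ▸ hsR) hw'R.le))) hfar)
    _ ≤ 2 * M + ‖z - w‖ / 2 := by linarith

theorem exists_pos_mul_le_norm_sub_of_re_le (hd : DifferentiableOn ℂ G HalfPlane)
    (hi : InjOn G HalfPlane) (hper : ∀ z ∈ HalfPlane, G (z + 2 * π * I) = G z + 2 * π * I)
    (hs : 0 < s) (hsR : s ≤ R) (hR : ∀ z : ℂ, R ≤ z.re → ‖deriv G z - 1‖ ≤ 1 / 2) :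
    ∃ c > 0, ∀ z w : ℂ, s ≤ z.re → z.re ≤ R → s ≤ w.re → c * ‖z - w‖ ≤ ‖G z - G w‖ := by
  obtain ⟨M, hM⟩ := exists_bound_on_strip_of_periodic (φ := fun z ↦ G z - z)
    (hd.continuousOn.sub continuousOn_id) (fun z hz ↦ by simp only [hper z hz]; abel) hs R
  have hM₀ : 0 ≤ M := (norm_nonneg _).trans (hM s (by simp) (by simpa using hsR))
  set K := Icc s (R + 8 * M) ×ℂ Icc (-(8 * M)) (2 * π + 8 * M)
  obtain ⟨c, hc, hK⟩ := (isCompact_Icc.reProdIm isCompact_Icc).exists_pos_mul_le_norm_sub_of_injOn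
    isOpen_halfPlane (fun z (hz : z ∈ K) ↦ hs.trans_le hz.1.1) hd hi
  refine ⟨min c (1 / 4), by positivity, ?_⟩
  suffices hstrip : ∀ z w : ℂ, s ≤ z.re → z.re ≤ R → z.im ∈ Icc 0 (2 * π) → s ≤ w.re →
      min c (1 / 4) * ‖z - w‖ ≤ ‖G z - G w‖ by
    intro z w hz hzR hw
    obtain ⟨k, hk⟩ := exists_int_im_add_mul_two_pi_I_mem_Icc z
    have hsub : z + k * (2 * π * I) - (w + k * (2 * π * I)) = z - w := by ring
    have hGsub : G (z + k * (2 * π * I)) - G (w + k * (2 * π * I)) = G z - G w := by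
      rw [map_add_int_mul_two_pi_I hper k (hs.trans_le hz),
        map_add_int_mul_two_pi_I hper k (hs.trans_le hw)]
      ring
    simpa only [hsub, hGsub] using hstrip (z + k * (2 * π * I)) (w + k * (2 * π * I))
      (by simpa using hz) (by simpa using hzR) hk (by simpa using hw)
  intro z w hz hzR ⟨hz₀, hz₁⟩ hw
  rcases le_total ‖z - w‖ (8 * M) with hzw | hzw
  · have hre := abs_re_le_norm (z - w)
    have him := abs_im_le_norm (z - w)
    rw [sub_re, abs_le] at hre
    rw [sub_im, abs_le] at him
    have hzK : z ∈ K := ⟨⟨hz, by linarith⟩, ⟨by linarith, by linarith⟩⟩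
    have hwK : w ∈ K := ⟨⟨hw, by linarith⟩, ⟨by linarith, by linarith⟩⟩
    exact (mul_le_mul_of_nonneg_right (min_le_left _ _) (norm_nonneg _)).trans (hK z hzK w hwK)
  · have hcoarse := norm_sub_sub_le_add_of_re_le hd hs hsR hR hM hz hzR hw
    have := norm_sub_norm_le (z - w) (G z - G w)
    rw [norm_sub_rev (z - w)] at this
    nlinarith [min_le_right c (1 / 4), norm_nonneg (z - w)]

theorem exists_pos_mul_le_norm_sub (hd : DifferentiableOn ℂ G HalfPlane)
    (hi : InjOn G HalfPlane) (hper : ∀ z ∈ HalfPlane, G (z + 2 * π * I) = G z + 2 * π * I)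
    (hs : 0 < s) (hR : ∀ z : ℂ, R ≤ z.re → ‖deriv G z - 1‖ ≤ 1 / 2) :
    ∃ c > 0, ∀ z w : ℂ, s ≤ z.re → s ≤ w.re → c * ‖z - w‖ ≤ ‖G z - G w‖ := by
  have hR' : ∀ z : ℂ, max R s ≤ z.re → ‖deriv G z - 1‖ ≤ 1 / 2 :=
    fun z hz ↦ hR z ((le_max_left _ _).trans hz)
  obtain ⟨c, hc, hstrip⟩ :=
    exists_pos_mul_le_norm_sub_of_re_le hd hi hper hs (le_max_right R s) hR'
  refine ⟨min c (1 / 2), by positivity, fun z w hz hw ↦ ?_⟩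
  rcases le_total z.re (max R s) with hzR | hzR
  · exact (mul_le_mul_of_nonneg_right (min_le_left _ _) (norm_nonneg _)).trans
      (hstrip z w hz hzR hw)
  rcases le_total w.re (max R s) with hwR | hwR
  · rw [norm_sub_rev z, norm_sub_rev (G z)]
    exact (mul_le_mul_of_nonneg_right (min_le_left _ _) (norm_nonneg _)).trans
      (hstrip w z hw hwR hz)
  have hfar := norm_sub_sub_le_mul_of_le_re hd (hs.trans_le (le_max_right R s)) hR' hzR hwR
  have := norm_sub_norm_le (z - w) (G z - G w)
  rw [norm_sub_rev (z - w)] at this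
  nlinarith [min_le_right c (1 / 2), norm_nonneg (z - w)]

theorem exists_norm_sub_le_mul (hd : DifferentiableOn ℂ G HalfPlane)
    (hper : ∀ z ∈ HalfPlane, G (z + 2 * π * I) = G z + 2 * π * I)
    (hs : 0 < s) (hR : ∀ z : ℂ, R ≤ z.re → ‖deriv G z - 1‖ ≤ 1 / 2) :
    ∃ B, ∀ z w : ℂ, s ≤ z.re → s ≤ w.re → ‖G z - G w‖ ≤ B * ‖z - w‖ := by
  obtain ⟨B, hB⟩ := exists_bound_on_strip_of_periodic (hd.deriv isOpen_halfPlane).continuousOn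
    (fun z hz ↦ deriv_add_two_pi_I hper hz) hs R
  have hbound : ∀ z ∈ {z : ℂ | s ≤ z.re}, ‖deriv G z‖ ≤ max B (3 / 2) := fun z hz ↦ by
    rcases le_total z.re R with hzR | hzR
    · exact (hB z hz hzR).trans (le_max_left _ _)
    · have := norm_le_norm_add_norm_sub' (deriv G z) 1
      rw [norm_one] at this
      linarith [hR z hzR, le_max_right B (3 / 2)]
  refine ⟨max B (3 / 2), fun z w hz hw ↦ ?_⟩
  exact (convex_halfSpace_re_ge s).norm_image_sub_le_of_norm_deriv_le
    (fun x hx ↦ hd.differentiableAt (isOpen_halfPlane.mem_nhds (hs.trans_le hx))) hbound hw hz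

end

theorem exists_one_le_inv_le_and_le {c : ℝ} (hc : 0 < c) (B : ℝ) :
    ∃ L : ℝ, 1 ≤ L ∧ L⁻¹ ≤ c ∧ B ≤ L :=
  ⟨max (max B c⁻¹) 1, le_max_right _ _,
    inv_le_of_inv_le₀ hc ((le_max_right _ _).trans (le_max_left _ _)),
    (le_max_left _ _).trans (le_max_left _ _)⟩

/-- **Bi-Lipschitz property of 2πi-periodic conformal maps.**  If `G : ℍ → ℂ` is injective
holomorphic, commutes with the translation by `2πi`, and `G′(z) → 1` uniformly as
`Re z → +∞`, then `G` is bi-Lipschitz on every half-plane `{Re z ≥ s}`, `s > 0`. -/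
theorem periodic_conformal_biLipschitz (G : ℂ → ℂ)
    (hd : DifferentiableOn ℂ G HalfPlane) (hi : InjOn G HalfPlane)
    (hper : ∀ z ∈ HalfPlane, G (z + 2 * (Real.pi : ℂ) * Complex.I) =
      G z + 2 * (Real.pi : ℂ) * Complex.I)
    (hderiv : ∀ ε : ℝ, 0 < ε → ∃ R : ℝ, ∀ z : ℂ, R ≤ z.re →
      ‖deriv G z - 1‖ ≤ ε) :
    ∀ s : ℝ, 0 < s → ∃ L : ℝ, 1 ≤ L ∧
      ∀ z w : ℂ, s ≤ z.re → s ≤ w.re →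
        L⁻¹ * ‖z - w‖ ≤ ‖G z - G w‖ ∧
        ‖G z - G w‖ ≤ L * ‖z - w‖ := by
  intro s hs
  obtain ⟨R, hR⟩ := hderiv (1 / 2) one_half_pos
  obtain ⟨c, hc, hlower⟩ := exists_pos_mul_le_norm_sub hd hi hper hs hR
  obtain ⟨B, hupper⟩ := exists_norm_sub_le_mul hd hper hs hR
  obtain ⟨L, hL, hLc, hBL⟩ := exists_one_le_inv_le_and_le hc B
  refine ⟨L, hL, fun z w hz hw ↦ ⟨?_, ?_⟩⟩
  · exact (mul_le_mul_of_nonneg_right hLc (norm_nonneg _)).trans (hlower z w hz hw)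
  · exact (hupper z w hz hw).trans (mul_le_mul_of_nonneg_right hBL (norm_nonneg _))
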